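/- Let R be an Artinian commutative ring with identity 1 ≠ 0. If the intersection graph Γ(R) is Hamiltonian, then Γ(R) is pancyclic: for every natural number k with 3 ≤ k ≤ (number of vertices of Γ(R)), the graph Γ(R) contains a cycle of length k. -/

import Mathlib

/-! If `R` is not reduced, Nakayama's lemma shows that the nilradical kills every minimal ideal,
so the annihilator of the nilradical meets every nonzero ideal: it is a vertex adjacent to all
others, and a Hamiltonian cycle through such a vertex can be shortcut to any length `k ≥ 3`.
If `R` is reduced it is semisimple. Pick a minimal ideal `N` and a complement `U`. Every
neighbour of `N` contains `N`, so the two neighbours of `N` on the Hamiltonian cycle are adjacent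
and `N` can be bypassed; on the resulting cycle `U` is adjacent to every other vertex, since an
ideal `I` with `I ⊓ U = 0` is contained in `N`. -/

open scoped Classical

/-- The intersection graph of a commutative ring: vertices are the nontrivial ideals,
two distinct ideals being adjacent iff their intersection is nonzero. -/
def intersectionGraph (R : Type*) [CommRing R] :
    SimpleGraph {I : Ideal R // I ≠ ⊥ ∧ I ≠ ⊤} where
  Adj I J := I ≠ J ∧ (I : Ideal R) ⊓ (J : Ideal R) ≠ ⊥
  symm := ⟨fun I J h => ⟨h.1.symm, by rw [inf_comm]; exact h.2⟩⟩
  loopless := ⟨fun I h => h.1 rfl⟩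

namespace SimpleGraph.Walk

variable {V : Type*} {G : SimpleGraph V}

theorem IsCycle.exists_isCycle_length_eq_of_forall_adj {v u : V} {c : G.Walk v v}
    (hc : c.IsCycle) (hu : u ∈ c.support) (hadj : ∀ w ∈ c.support, w ≠ u → G.Adj w u)
    {k : ℕ} (hk : 3 ≤ k) (hkc : k ≤ c.length) :
    ∃ c' : G.Walk u u, c'.IsCycle ∧ c'.length = k := by
  have hc₀ : (c.rotate u hu).IsCycle := hc.rotate hu
  set c₀ := c.rotate u hu
  have hlen : c₀.length = c.length := length_rotate c u hu
  set p := c₀.take (k - 1)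
  have hp : p.IsPath := hc₀.isPath_take (by omega)
  have hplen : p.length = k - 1 := by rw [take_length]; omega
  have hend : c₀.getVert (k - 1) ≠ u := by
    rw [Ne, hc₀.getVert_endpoint_iff (by omega)]
    omega
  have hlast : G.Adj u (c₀.getVert (k - 1)) :=
    (hadj _ ((mem_support_rotate_iff c u hu).mp (c₀.getVert_mem_support _)) hend).symm
  refine ⟨cons hlast p.reverse, (cons_isCycle_iff _ _).mpr ⟨hp.reverse, fun he => ?_⟩, ?_⟩
  · rw [edges_reverse, List.mem_reverse] at he
    have := hp.length_eq_one_of_mem_edges he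
    omega
  · rw [length_cons, length_reverse]
    omega

theorem IsCycle.exists_isCycle_of_adj_snd_penultimate {v : V} {c : G.Walk v v}
    (hc : c.IsCycle) (h4 : 4 ≤ c.length) (hadj : G.Adj c.snd c.penultimate) :
    ∃ (x : V) (c' : G.Walk x x), c'.IsCycle ∧ c'.length + 1 = c.length ∧
      ∀ w, w ∈ c'.support ↔ w ∈ c.support ∧ w ≠ v := by
  cases c with
  | nil => simp at h4
  | cons h p =>
    have hp : p.IsPath := ((cons_isCycle_iff p h).mp hc).1
    rw [length_cons] at h4
    have hpnil : ¬p.Nil := by rw [← length_eq_zero_iff]; omega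
    rw [snd_cons, penultimate_cons_of_not_nil _ _ hpnil] at hadj
    have hq : p.dropLast.IsPath := hp.dropLast
    have hqlen : p.dropLast.length + 1 = p.length := length_dropLast_add_one hpnil
    refine ⟨_, cons hadj.symm p.dropLast, (cons_isCycle_iff _ _).mpr ⟨hq, fun he => ?_⟩, ?_, ?_⟩
    · have := hq.length_eq_one_of_mem_edges (Sym2.eq_swap ▸ he)
      omega
    · rw [length_cons, length_cons]
      omega
    · have hsupp := support_dropLast_concat hpnil
      have hnd := hp.support_nodup
      rw [← hsupp, List.nodup_append] at hnd
      have hend := p.dropLast.end_mem_support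
      intro w
      rw [support_cons, support_cons, ← hsupp]
      simp only [List.mem_cons, List.mem_append] at hnd ⊢
      grind

theorem IsCycle.exists_isCycle_length_eq_of_isClique_neighborSet {x v u : V} {c : G.Walk x x}
    (hc : c.IsCycle) (hv : v ∈ c.support) (hclique : G.IsClique (G.neighborSet v))
    (hu : u ∈ c.support) (huv : u ≠ v) (hadj : ∀ w ∈ c.support, w ≠ v → w ≠ u → G.Adj w u)
    {k : ℕ} (hk : 3 ≤ k) (hkc : k < c.length) :
    ∃ c' : G.Walk u u, c'.IsCycle ∧ c'.length = k := by
  have hc₀ : (c.rotate v hv).IsCycle := hc.rotate hv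
  have hmem : ∀ w, w ∈ (c.rotate v hv).support ↔ w ∈ c.support :=
    fun _ => mem_support_rotate_iff c v hv
  have hsp : G.Adj (c.rotate v hv).snd (c.rotate v hv).penultimate :=
    hclique (adj_snd hc₀.not_nil) (adj_penultimate hc₀.not_nil).symm hc₀.snd_ne_penultimate
  obtain ⟨y, c', hc', hlen, hsupp⟩ :=
    hc₀.exists_isCycle_of_adj_snd_penultimate (by rw [length_rotate]; omega) hsp
  refine hc'.exists_isCycle_length_eq_of_forall_adj ((hsupp u).mpr ⟨(hmem u).mpr hu, huv⟩)
    (fun w hw hwu => ?_) hk (by rw [length_rotate] at hlen; omega)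
  obtain ⟨hw, hwv⟩ := (hsupp w).mp hw
  exact hadj w ((hmem w).mp hw) hwv hwu

end SimpleGraph.Walk

theorem inf_ne_bot_of_forall_isAtom_le {α : Type*} [Lattice α] [OrderBot α] [IsAtomic α]
    {m b : α} (hm : ∀ a, IsAtom a → a ≤ m) (hb : b ≠ ⊥) : b ⊓ m ≠ ⊥ := by
  obtain ⟨a, ha, hab⟩ := (eq_bot_or_exists_atom_le b).resolve_left hb
  exact ne_bot_of_le_ne_bot ha.ne_bot (le_inf hab (hm a ha))

namespace Ideal

variable {R : Type*} [CommRing R]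

theorem le_of_inf_eq_bot_of_sup_eq_top {A N U : Ideal R} (hAN : A ⊓ N = ⊥) (hNU : N ⊔ U = ⊤) :
    A ≤ U :=
  calc A = A * N ⊔ A * U := by rw [← mul_sup, hNU, mul_top]
    _ ≤ U := sup_le (mul_le_inf.trans hAN.le |>.trans bot_le) mul_le_right

theorem inf_ne_bot_of_isAtom_of_sup_eq_top {N U I : Ideal R} (hN : IsAtom N) (hNU : N ⊔ U = ⊤)
    (hI : I ≠ ⊥) (hIN : I ≠ N) : I ⊓ U ≠ ⊥ := fun hIU =>
  hIN <| (hN.le_iff_eq hI).mp <| le_of_inf_eq_bot_of_sup_eq_top hIU (sup_comm N U ▸ hNU)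

theorem mul_eq_bot_of_isAtom_of_le_jacobson [IsNoetherianRing R] {I N : Ideal R}
    (hN : IsAtom N) (hI : I ≤ Ring.jacobson R) : I * N = ⊥ :=
  (hN.le_iff.mp mul_le_right).resolve_right fun h => hN.ne_bot <|
    Submodule.eq_bot_of_le_smul_of_le_jacobson_bot I N (IsNoetherian.noetherian N) h.ge
      (jacobson_bot (R := R) ▸ hI)

theorem exists_forall_inf_ne_bot_of_isAtom [IsSemisimpleRing R] {N : Ideal R}
    (hN : IsAtom N) (hNtop : N ≠ ⊤) :
    ∃ U : Ideal R, U ≠ ⊥ ∧ U ≠ ⊤ ∧ U ≠ N ∧ ∀ I : Ideal R, I ≠ ⊥ → I ≠ N → I ⊓ U ≠ ⊥ := by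
  obtain ⟨U, hNU⟩ := exists_isCompl N
  refine ⟨U, fun h => hNtop ?_, fun h => hN.ne_bot ?_, fun h => hN.ne_bot ?_,
    fun I hI hIN => inf_ne_bot_of_isAtom_of_sup_eq_top hN hNU.sup_eq_top hI hIN⟩
  · simpa [h] using hNU.sup_eq_top
  · simpa [h] using hNU.inf_eq_bot
  · simpa [h] using hNU.inf_eq_bot

theorem exists_forall_inf_ne_bot_of_not_isReduced [IsArtinianRing R] (hR : ¬IsReduced R) :
    ∃ M : Ideal R, M ≠ ⊥ ∧ M ≠ ⊤ ∧ ∀ I : Ideal R, I ≠ ⊥ → I ⊓ M ≠ ⊥ := by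
  have hM : ∀ I : Ideal R, I ≠ ⊥ → I ⊓ (nilradical R).annihilator ≠ ⊥ := by
    refine fun I hI => inf_ne_bot_of_forall_isAtom_le (fun N hN => ?_) hI
    rw [Submodule.le_annihilator_iff, smul_eq_mul, mul_comm]
    exact mul_eq_bot_of_isAtom_of_le_jacobson hN (nilradical_le_jacobson R)
  have : Nontrivial R := not_subsingleton_iff_nontrivial.mp fun _ => hR inferInstance
  refine ⟨_, fun h => hM ⊤ top_ne_bot (by rw [h, inf_bot_eq]), ?_, hM⟩
  rwa [Ne, Submodule.annihilator_eq_top_iff, nilradical_eq_bot_iff]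

end Ideal

theorem intersectionGraph.isClique_neighborSet_of_isAtom {R : Type*} [CommRing R]
    {N : {I : Ideal R // I ≠ ⊥ ∧ I ≠ ⊤}} (hN : IsAtom N.1) :
    (intersectionGraph R).IsClique ((intersectionGraph R).neighborSet N) := by
  have hle : ∀ x ∈ (intersectionGraph R).neighborSet N, N.1 ≤ x.1 :=
    fun x hx => hN.not_disjoint_iff_le.mp (disjoint_iff.not.mpr hx.2)
  exact fun x hx y hy hxy => ⟨hxy, ne_bot_of_le_ne_bot hN.ne_bot (le_inf (hle x hx) (hle y hy))⟩

theorem intersectionGraph_hamiltonian_implies_pancyclic_general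
    (R : Type*) [CommRing R] [IsArtinianRing R]
    (h_ham : ∃ (a : {I : Ideal R // I ≠ ⊥ ∧ I ≠ ⊤})
      (p : (intersectionGraph R).Walk a a), p.IsHamiltonianCycle) :
    ∀ k : ℕ, 3 ≤ k → k ≤ Nat.card {I : Ideal R // I ≠ ⊥ ∧ I ≠ ⊤} →
      ∃ (a : {I : Ideal R // I ≠ ⊥ ∧ I ≠ ⊤})
        (p : (intersectionGraph R).Walk a a), p.IsCycle ∧ p.length = k := by
  intro k hk hkn
  obtain ⟨a, c, hc⟩ := h_ham
  have := hc.finite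
  have hlen : c.length = Nat.card {I : Ideal R // I ≠ ⊥ ∧ I ≠ ⊤} := by
    have := Fintype.ofFinite {I : Ideal R // I ≠ ⊥ ∧ I ≠ ⊤}
    rw [Nat.card_eq_fintype_card, hc.length_eq]
  by_cases hR : IsReduced R
  · rcases hkn.eq_or_lt with rfl | hkn
    · exact ⟨a, c, hc.isCycle, hlen⟩
    have := IsArtinianRing.isSemisimpleRing_of_isReduced R
    obtain ⟨N, hN, hNa⟩ := (eq_bot_or_exists_atom_le a.1).resolve_left a.2.1
    have hNtop : N ≠ ⊤ := ne_top_of_le_ne_top a.2.2 hNa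
    obtain ⟨U, hUbot, hUtop, hUN, hU⟩ := Ideal.exists_forall_inf_ne_bot_of_isAtom hN hNtop
    obtain ⟨c', hc', hlen'⟩ := hc.isCycle.exists_isCycle_length_eq_of_isClique_neighborSet
      (hc.mem_support ⟨N, hN.ne_bot, hNtop⟩) (intersectionGraph.isClique_neighborSet_of_isAtom hN)
      (hc.mem_support ⟨U, hUbot, hUtop⟩) (fun h => hUN congr($h.1))
      (fun w _ hwN hwU => ⟨hwU, hU w.1 w.2.1 fun h => hwN (Subtype.ext h)⟩) hk (hlen ▸ hkn)
    exact ⟨_, c', hc', hlen'⟩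
  · obtain ⟨M, hMbot, hMtop, hM⟩ := Ideal.exists_forall_inf_ne_bot_of_not_isReduced hR
    obtain ⟨c', hc', hlen'⟩ := hc.isCycle.exists_isCycle_length_eq_of_forall_adj
      (hc.mem_support ⟨M, hMbot, hMtop⟩) (fun w _ hw => ⟨hw, hM w.1 w.2.1⟩) hk (hlen ▸ hkn)
    exact ⟨_, c', hc', hlen'⟩

/-- Let `R` be an Artinian commutative ring with `1 ≠ 0`.  If the
intersection graph `Γ(R)` is Hamiltonian, then it is pancyclic: it contains a cycle of
every length `k` with `3 ≤ k ≤ (number of vertices)`. -/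
theorem intersectionGraph_hamiltonian_implies_pancyclic
    (R : Type*) [CommRing R] [Nontrivial R] [IsArtinianRing R]
    (h_ham : ∃ (a : {I : Ideal R // I ≠ ⊥ ∧ I ≠ ⊤})
      (p : (intersectionGraph R).Walk a a), p.IsHamiltonianCycle) :
    ∀ k : ℕ, 3 ≤ k → k ≤ Nat.card {I : Ideal R // I ≠ ⊥ ∧ I ≠ ⊤} →
      ∃ (a : {I : Ideal R // I ≠ ⊥ ∧ I ≠ ⊤})
        (p : (intersectionGraph R).Walk a a), p.IsCycle ∧ p.length = k :=
  intersectionGraph_hamiltonian_implies_pancyclic_general R h_ham
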